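/- Let X be a Banach space and f : X → ℝ∪{+∞} with ∂f maximal monotone. Then D(∂f) is norm-dense in dom f. -/

import Mathlib

open scoped Topology

section Defs

variable {X : Type*} [AddCommGroup X] [Module ℝ X] [TopologicalSpace X]

/-- `p ∈ ∂f(x)`: `f x` is finite and `f y ≥ f x + ⟨y - x, p⟩` for all `y`. -/
def IsSubgrad (f : X → EReal) (x : X) (p : X →L[ℝ] ℝ) : Prop :=
  f x ≠ ⊤ ∧ f x ≠ ⊥ ∧ ∀ y, f x + (p (y - x) : EReal) ≤ f y

/-- Graph of the convex subdifferential of `f`. -/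
def graphSub (f : X → EReal) : Set (X × (X →L[ℝ] ℝ)) :=
  {q | IsSubgrad f q.1 q.2}

/-- Domain `D(∂f)` of the subdifferential. -/
def subdiffDom (f : X → EReal) : Set X := {x | ∃ p, IsSubgrad f x p}

/-- Range `R(∂f)` of the subdifferential. -/
def subdiffRan (f : X → EReal) : Set (X →L[ℝ] ℝ) := {p | ∃ x, IsSubgrad f x p}

/-- Monotone subset of `X × X*`. -/
def MonotoneSet (S : Set (X × (X →L[ℝ] ℝ))) : Prop :=
  ∀ a ∈ S, ∀ b ∈ S, 0 ≤ a.2 (a.1 - b.1) - b.2 (a.1 - b.1)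

/-- Maximal monotone subset of `X × X*` (maximal w.r.t. graph inclusion). -/
def MaxMonotoneSet (S : Set (X × (X →L[ℝ] ℝ))) : Prop :=
  MonotoneSet S ∧ ∀ T, MonotoneSet T → S ⊆ T → T = S

/-- Proper function: never `−∞` and not identically `+∞`. -/
def ProperE {Y : Type*} (f : Y → EReal) : Prop :=
  (∃ x, f x ≠ ⊤) ∧ ∀ x, f x ≠ ⊥

/-- Convexity of an extended-real-valued function via its epigraph. -/
def ConvexEpi (f : X → EReal) : Prop :=
  Convex ℝ {q : X × ℝ | f q.1 ≤ (q.2 : EReal)}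

/-- The lsc convex hull: the greatest lsc convex function majorized by `f`. -/
noncomputable def lscConvHull (f : X → EReal) : X → EReal := fun x =>
  sSup {v | ∃ g : X → EReal, ConvexEpi g ∧ LowerSemicontinuous g ∧ g ≤ f ∧ v = g x}

/-- Convex conjugate w.r.t. the dual system `(X, X*)`. -/
noncomputable def conjE (f : X → EReal) (p : X →L[ℝ] ℝ) : EReal :=
  ⨆ x, ((p x : EReal) - f x)

/-- Biconjugate `f**`. -/
noncomputable def biconjE (f : X → EReal) (x : X) : EReal :=
  ⨆ p : X →L[ℝ] ℝ, ((p x : EReal) - conjE f p)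

/-- Fitzpatrick function of `∂f`. -/
noncomputable def fitzSub (f : X → EReal) (x : X) (p : X →L[ℝ] ℝ) : EReal :=
  ⨆ a, ⨆ s, ⨆ _ : IsSubgrad f a s, ((s (x - a) + p a : ℝ) : EReal)

/-- Upper envelope `f^∪(x) = sup{⟨x−a, a*⟩ + f(a) : (a,a*) ∈ Graph ∂f}`. -/
noncomputable def upperEnv (f : X → EReal) (x : X) : EReal :=
  ⨆ a, ⨆ s, ⨆ _ : IsSubgrad f a s, ((s (x - a) : EReal) + f a)

end Defs

/-!
The affine minorants `y ↦ f a + ⟨y - a, a*⟩`, `(a, a*) ∈ Graph ∂f`, have as supremum a convex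
lower semicontinuous function `f^∪ ≤ f` with `Graph ∂f ⊆ Graph ∂f^∪`. Since `∂f^∪` is monotone,
maximality of `∂f` forces `∂f^∪ = ∂f`, and `dom f ⊆ dom f^∪`. It therefore suffices that `D(∂g)`
is dense in `dom g` for a convex lsc `g` above a continuous affine function (Brøndsted–Rockafellar):
Ekeland's principle, applied to `g` minus that affine function, finds next to any `x₀ ∈ dom g` a
point `v` where `g` lies above a cone `g v - ε ‖· - v‖`, and separating this open cone from the
epigraph of `g` gives a subgradient at `v`.
-/

open Set Filter Metric Topology

section Ekeland

variable {Y : Type*} [MetricSpace Y] {F : Y → ℝ} {ε : ℝ}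

def ekelandSet (F : Y → ℝ) (ε : ℝ) (x : Y) : Set Y := {y | F y + ε * dist y x ≤ F x}

lemma mem_ekelandSet_self (x : Y) : x ∈ ekelandSet F ε x := by
  simp [ekelandSet]

lemma ekelandSet_subset (hε : 0 ≤ ε) {x y : Y} (hy : y ∈ ekelandSet F ε x) :
    ekelandSet F ε y ⊆ ekelandSet F ε x := fun z hz => by
  have := dist_triangle z y x
  simp only [ekelandSet, mem_ofPred_eq] at hy hz ⊢
  nlinarith

lemma isClosed_ekelandSet (hF : LowerSemicontinuous F) (x : Y) :
    IsClosed (ekelandSet F ε x) :=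
  (hF.add (continuous_const.mul (continuous_id.dist continuous_const)).lowerSemicontinuous)
    |>.isClosed_preimage (F x)

/-- Choosing `y` almost minimal for `F` on `ekelandSet F ε x` confines `ekelandSet F ε y` to a
small ball around `y`. -/
lemma exists_mem_ekelandSet_subset_closedBall (hbdd : BddBelow (range F)) (hε : 0 < ε) (x : Y)
    {η : ℝ} (hη : 0 < η) :
    ∃ y ∈ ekelandSet F ε x, ekelandSet F ε y ⊆ closedBall y η := by
  have hne : (F '' ekelandSet F ε x).Nonempty := ⟨F x, x, mem_ekelandSet_self x, rfl⟩
  have hbdd' : BddBelow (F '' ekelandSet F ε x) := hbdd.mono (image_subset_range _ _)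
  obtain ⟨_, ⟨y, hyx, rfl⟩, hy⟩ := exists_lt_of_csInf_lt hne
    (lt_add_of_pos_right (sInf (F '' ekelandSet F ε x)) (mul_pos hε hη))
  refine ⟨y, hyx, fun z hzy => mem_closedBall.2 ?_⟩
  have hinf : sInf (F '' ekelandSet F ε x) ≤ F z :=
    csInf_le hbdd' ⟨z, ekelandSet_subset hε.le hyx hzy, rfl⟩
  have hzy' : F z + ε * dist z y ≤ F y := hzy
  nlinarith

/-- Ekeland's variational principle. -/
theorem exists_forall_le_add_mul_dist [CompleteSpace Y] (hF : LowerSemicontinuous F)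
    (hbdd : BddBelow (range F)) (hε : 0 < ε) (x₀ : Y) :
    ∃ v, F v + ε * dist v x₀ ≤ F x₀ ∧ ∀ y, F v ≤ F y + ε * dist y v := by
  choose next hnext_mem hnext_ball using fun (n : ℕ) x =>
    exists_mem_ekelandSet_subset_closedBall hbdd hε x (pow_pos (one_half_pos (α := ℝ)) n)
  let u : ℕ → Y := fun n => Nat.rec (next 0 x₀) (fun n x => next (n + 1) x) n
  let S : ℕ → Set Y := fun n => ekelandSet F ε (u n)
  have hS_ball (n : ℕ) : S n ⊆ closedBall (u n) ((1 / 2) ^ n) := by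
    cases n <;> exact hnext_ball _ _
  have hS_anti : Antitone S := antitone_nat_of_succ_le fun n =>
    ekelandSet_subset hε.le (hnext_mem (n + 1) (u n))
  have hdiam : Tendsto (fun n => diam (S n)) atTop (𝓝 0) := by
    refine squeeze_zero (fun n => diam_nonneg) (fun n => (diam_mono (hS_ball n)
      isBounded_closedBall).trans (diam_closedBall (by positivity))) ?_
    simpa using (tendsto_pow_atTop_nhds_zero_of_lt_one (by norm_num : (0 : ℝ) ≤ 1 / 2)
      (by norm_num)).const_mul 2
  obtain ⟨v, hv⟩ := nonempty_iInter_of_nonempty_biInter (s := S)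
    (fun n => isClosed_ekelandSet hF _) (fun n => isBounded_closedBall.subset (hS_ball n))
    (fun N => ⟨u N, mem_iInter₂.2 fun n hn => hS_anti hn (mem_ekelandSet_self _)⟩) hdiam
  rw [mem_iInter] at hv
  refine ⟨v, ekelandSet_subset hε.le (hnext_mem 0 x₀) (hv 0), fun y => ?_⟩
  by_contra! hy
  have hyv : y ∈ ekelandSet F ε v := hy.le
  have hdist : dist y v ≤ 0 := ge_of_tendsto' hdiam fun n =>
    dist_le_diam_of_mem (isBounded_closedBall.subset (hS_ball n))
      (ekelandSet_subset hε.le (hv n) hyv) (hv n)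
  obtain rfl : y = v := dist_le_zero.1 hdist
  simp at hy

end Ekeland

/-- Reduces to the real case through the truncation `min F K` with `K > F x₀`. -/
theorem exists_forall_le_add_mul_dist_ereal {Y : Type*} [MetricSpace Y] [CompleteSpace Y]
    {F : Y → EReal} (hF : LowerSemicontinuous F) {c : ℝ} (hc : ∀ y, (c : EReal) ≤ F y)
    {x₀ : Y} {r₀ : ℝ} (hx₀ : F x₀ = r₀) {ε : ℝ} (hε : 0 < ε) :
    ∃ v, ∃ r : ℝ, F v = r ∧ r + ε * dist v x₀ ≤ r₀ ∧
      ∀ y, (r : EReal) ≤ F y + ((ε * dist y v : ℝ) : EReal) := by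
  set K : ℝ := max c r₀ + 1
  set G : Y → ℝ := fun y => (min (F y) K).toReal
  have hG (y : Y) : (G y : EReal) = min (F y) K := by
    refine EReal.coe_toReal (min_le_right _ _ |>.trans_lt (EReal.coe_lt_top K)).ne ?_
    refine ne_bot_of_le_ne_bot (EReal.coe_ne_bot c) (le_min (hc y) ?_)
    exact EReal.coe_le_coe_iff.2 (by linarith [le_max_left c r₀])
  have hG_lt (y : Y) (t : ℝ) : t < G y ↔ (t : EReal) < min (F y) K := by
    rw [← hG, EReal.coe_lt_coe_iff]
  have hGlsc : LowerSemicontinuous G := fun y t ht =>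
    ((hF.inf lowerSemicontinuous_const) y t ((hG_lt y t).1 ht)).mono fun z hz => (hG_lt z t).2 hz
  have hGbdd : BddBelow (range G) := ⟨c, by
    rintro _ ⟨y, rfl⟩
    exact EReal.coe_le_coe_iff.1 <| (hG y).symm ▸ le_min (hc y)
      (EReal.coe_le_coe_iff.2 (by linarith [le_max_left c r₀]))⟩
  have hGx₀ : G x₀ = r₀ := by
    rw [← EReal.coe_eq_coe_iff, hG, hx₀, min_eq_left (EReal.coe_le_coe_iff.2 (by
      linarith [le_max_right c r₀]))]
  obtain ⟨v, hv, hmin⟩ := exists_forall_le_add_mul_dist hGlsc hGbdd hε x₀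
  rw [hGx₀] at hv
  have hFv : F v = G v := by
    have hlt : (G v : EReal) < K :=
      EReal.coe_lt_coe_iff.2 (by nlinarith [dist_nonneg (x := v) (y := x₀), le_max_right c r₀])
    rw [hG] at hlt ⊢
    exact (min_eq_left (le_of_not_ge fun h => hlt.ne (min_eq_right h))).symm
  refine ⟨v, G v, hFv, hv, fun y => ?_⟩
  calc (G v : EReal) ≤ ((G y + ε * dist y v : ℝ) : EReal) := EReal.coe_le_coe_iff.2 (hmin y)
    _ = (G y : EReal) + ((ε * dist y v : ℝ) : EReal) := EReal.coe_add _ _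
    _ ≤ F y + ((ε * dist y v : ℝ) : EReal) := by
      gcongr
      exact (hG y).trans_le (min_le_left _ _)

section Subgradient

variable {X : Type*} [AddCommGroup X] [Module ℝ X] [TopologicalSpace X]
  {f : X → EReal} {x : X} {p : X →L[ℝ] ℝ}

lemma isSubgrad_iff_of_eq_coe {r : ℝ} (hr : f x = r) :
    IsSubgrad f x p ↔ ∀ y, ((r + p (y - x) : ℝ) : EReal) ≤ f y := by
  simp only [IsSubgrad, hr, EReal.coe_ne_top, EReal.coe_ne_bot, ne_eq, not_false_eq_true,
    true_and, EReal.coe_add]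

lemma IsSubgrad.eq_coe_toReal (h : IsSubgrad f x p) : f x = (f x).toReal :=
  (EReal.coe_toReal h.1 h.2.1).symm

lemma IsSubgrad.add_affine (h : IsSubgrad f x p) (φ : X →L[ℝ] ℝ) (c : ℝ) :
    IsSubgrad (fun y => f y + ((φ y + c : ℝ) : EReal)) x (p + φ) := by
  refine (isSubgrad_iff_of_eq_coe (r := (f x).toReal + (φ x + c)) ?_).2 fun y => ?_
  · rw [EReal.coe_add ((f x).toReal), ← h.eq_coe_toReal]
  calc (((f x).toReal + (φ x + c) + (p + φ) (y - x) : ℝ) : EReal)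
      = (((f x).toReal + p (y - x) : ℝ) : EReal) + ((φ y + c : ℝ) : EReal) := by
        rw [← EReal.coe_add, add_apply, map_sub φ]; ring_nf
    _ ≤ f y + ((φ y + c : ℝ) : EReal) := by
        gcongr
        exact (isSubgrad_iff_of_eq_coe h.eq_coe_toReal).1 h y

lemma monotoneSet_graphSub (f : X → EReal) : MonotoneSet (graphSub f) := by
  rintro ⟨a, s⟩ ha ⟨b, t⟩ hb
  have hab := (isSubgrad_iff_of_eq_coe ha.eq_coe_toReal).1 ha b
  have hba := (isSubgrad_iff_of_eq_coe hb.eq_coe_toReal).1 hb a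
  rw [hb.eq_coe_toReal, EReal.coe_le_coe_iff] at hab
  rw [ha.eq_coe_toReal, EReal.coe_le_coe_iff] at hba
  simp only [map_sub] at hab hba ⊢
  linarith

lemma MaxMonotoneSet.nonempty {S : Set (X × (X →L[ℝ] ℝ))} (hS : MaxMonotoneSet S) :
    S.Nonempty := by
  by_contra! h
  have hsingle : MonotoneSet ({(0, 0)} : Set (X × (X →L[ℝ] ℝ))) := by
    rintro a rfl b rfl
    simp
  exact (singleton_ne_empty _) ((hS.2 _ hsingle (h ▸ empty_subset _)).trans h)

end Subgradient

section Epigraph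

variable {X : Type*} [AddCommGroup X] [Module ℝ X]

lemma EReal.add_coe_le_coe_iff {x : EReal} {a b : ℝ} : x + a ≤ b ↔ x ≤ ((b - a : ℝ) : EReal) := by
  rw [EReal.coe_sub, EReal.le_sub_iff_add_le (.inl (EReal.coe_ne_bot a))
    (.inl (EReal.coe_ne_top a))]

lemma convexEpi_coe_affine (φ : X →ₗ[ℝ] ℝ) (c : ℝ) :
    ConvexEpi (fun x => ((φ x + c : ℝ) : EReal)) := by
  have hepi : {q : X × ℝ | ((φ q.1 + c : ℝ) : EReal) ≤ q.2} =
      {q | (φ.comp (LinearMap.fst ℝ X ℝ) - LinearMap.snd ℝ X ℝ) q ≤ -c} := by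
    ext q
    simp only [mem_ofPred_eq, EReal.coe_le_coe_iff, LinearMap.sub_apply, LinearMap.coe_comp,
      Function.comp_apply, LinearMap.fst_apply, LinearMap.snd_apply]
    constructor <;> intro <;> linarith
  rw [ConvexEpi, hepi]
  exact convex_halfSpace_le (LinearMap.isLinear _) (-c)

lemma convexEpi_iSup {ι : Sort*} {g : ι → X → EReal} (hg : ∀ i, ConvexEpi (g i)) :
    ConvexEpi (fun x => ⨆ i, g i x) := by
  simp only [ConvexEpi, iSup_le_iff, ofPred_forall]
  exact convex_iInter hg

lemma ConvexEpi.add_affine {g : X → EReal} (hg : ConvexEpi g) (φ : X →ₗ[ℝ] ℝ) (c : ℝ) :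
    ConvexEpi (fun x => g x + ((φ x + c : ℝ) : EReal)) := by
  intro q₁ h₁ q₂ h₂ a b ha hb hab
  simp only [mem_ofPred_eq, EReal.add_coe_le_coe_iff] at h₁ h₂ ⊢
  have := hg (x := (q₁.1, q₁.2 - (φ q₁.1 + c))) (y := (q₂.1, q₂.2 - (φ q₂.1 + c))) h₁ h₂ ha hb hab
  simp only [mem_ofPred_eq, Prod.fst_add, Prod.snd_add, Prod.smul_fst, Prod.smul_snd,
    smul_eq_mul] at this ⊢
  convert this using 3
  simp only [map_add, map_smul, smul_eq_mul]
  linear_combination c * hab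

end Epigraph

lemma LowerSemicontinuous.add_coe {Y : Type*} [TopologicalSpace Y] {g : Y → EReal}
    (hg : LowerSemicontinuous g) {h : Y → ℝ} (hh : Continuous h) :
    LowerSemicontinuous fun y => g y + (h y : EReal) :=
  hg.add' (continuous_coe_real_ereal.comp hh).lowerSemicontinuous fun _ =>
    EReal.continuousAt_add (.inr (EReal.coe_ne_bot _)) (.inr (EReal.coe_ne_top _))

section UpperEnvelope

variable {X : Type*} [AddCommGroup X] [Module ℝ X] [TopologicalSpace X]
  {f : X → EReal} {a : X} {s : X →L[ℝ] ℝ}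

lemma IsSubgrad.affine_eq (h : IsSubgrad f a s) (x : X) :
    (s (x - a) : EReal) + f a = ((s x + ((f a).toReal - s a) : ℝ) : EReal) := by
  rw [h.eq_coe_toReal, ← EReal.coe_add, EReal.toReal_coe, map_sub]
  ring_nf

lemma IsSubgrad.coe_le_upperEnv (h : IsSubgrad f a s) (x : X) :
    ((s x + ((f a).toReal - s a) : ℝ) : EReal) ≤ upperEnv f x :=
  h.affine_eq x ▸ le_iSup₂_of_le a s (le_iSup_of_le h le_rfl)

lemma upperEnv_le (f : X → EReal) : upperEnv f ≤ f := fun x =>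
  iSup₂_le fun _ _ => iSup_le fun h => add_comm (f _) _ ▸ h.2.2 x

lemma IsSubgrad.isSubgrad_upperEnv (h : IsSubgrad f a s) : IsSubgrad (upperEnv f) a s := by
  have heq : upperEnv f a = (f a).toReal := by
    refine le_antisymm (h.eq_coe_toReal ▸ upperEnv_le f a) ?_
    simpa using h.coe_le_upperEnv a
  refine (isSubgrad_iff_of_eq_coe heq).2 fun y => ?_
  convert h.coe_le_upperEnv y using 2
  rw [map_sub]
  ring

lemma convexEpi_upperEnv (f : X → EReal) : ConvexEpi (upperEnv f) :=
  convexEpi_iSup fun _ => convexEpi_iSup fun s => convexEpi_iSup fun h => by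
    simpa only [h.affine_eq, ContinuousLinearMap.coe_coe] using
      convexEpi_coe_affine (s : X →ₗ[ℝ] ℝ) _

lemma lowerSemicontinuous_upperEnv (f : X → EReal) : LowerSemicontinuous (upperEnv f) :=
  lowerSemicontinuous_iSup fun _ => lowerSemicontinuous_iSup fun s =>
    lowerSemicontinuous_iSup fun h => by
      simp only [h.affine_eq]
      exact (continuous_coe_real_ereal.comp (by fun_prop)).lowerSemicontinuous

lemma MaxMonotoneSet.graphSub_upperEnv (hmax : MaxMonotoneSet (graphSub f)) :
    graphSub (upperEnv f) = graphSub f :=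
  hmax.2 _ (monotoneSet_graphSub _) fun _ hq => IsSubgrad.isSubgrad_upperEnv hq

lemma MaxMonotoneSet.subdiffDom_upperEnv (hmax : MaxMonotoneSet (graphSub f)) :
    subdiffDom (upperEnv f) = subdiffDom f := by
  ext x
  exact exists_congr fun p => Set.ext_iff.1 hmax.graphSub_upperEnv (x, p)

end UpperEnvelope

section Normed

variable {X : Type*} [NormedAddCommGroup X] [NormedSpace ℝ X]

/-- Separating the epigraph of `F` from the open cone `{(y, t) | t < r - ε ‖y - v‖}` below it
yields a non-vertical supporting hyperplane at `(v, r)`. -/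
lemma exists_isSubgrad_of_le_add_mul_norm {F : X → EReal} (hF : ConvexEpi F) {v : X} {r ε : ℝ}
    (hε : 0 ≤ ε) (hv : F v = r) (hcone : ∀ y, (r : EReal) ≤ F y + ((ε * ‖y - v‖ : ℝ) : EReal)) :
    ∃ p, IsSubgrad F v p := by
  set cone : Set (X × ℝ) := {q | q.2 + ε * ‖q.1 - v‖ < r}
  have hcone_convex : Convex ℝ cone := by
    have hnorm : ConvexOn ℝ univ fun q : X × ℝ => ‖q.1 - v‖ := by
      simpa [Function.comp_def] using (convexOn_norm convex_univ).comp_affineMap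
        ((LinearMap.fst ℝ X ℝ).toAffineMap - AffineMap.const ℝ (X × ℝ) v)
    simpa using (((LinearMap.snd ℝ X ℝ).convexOn convex_univ).add (hnorm.smul hε)).convex_lt r
  have hcone_open : IsOpen cone := isOpen_lt (by fun_prop) continuous_const
  have hdisj : Disjoint cone {q : X × ℝ | F q.1 ≤ q.2} := by
    refine disjoint_left.2 fun q hq hqF => ?_
    have := (hcone q.1).trans (add_le_add_left hqF _)
    rw [← EReal.coe_add, EReal.coe_le_coe_iff] at this
    exact (lt_irrefl _ (hq.trans_le this))
  obtain ⟨Φ, u, hΦcone, hΦepi⟩ := geometric_hahn_banach_open hcone_convex hcone_open hF hdisj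
  set ψ : X →L[ℝ] ℝ := Φ.comp (ContinuousLinearMap.inl ℝ X ℝ)
  set β : ℝ := Φ (0, 1)
  have hΦ (y : X) (t : ℝ) : Φ (y, t) = ψ y + t * β := by
    rw [show ((y, t) : X × ℝ) = (y, 0) + t • (0, 1) by simp, map_add, map_smul, smul_eq_mul]
    rfl
  have hu_le : u ≤ ψ v + r * β := hΦ v r ▸ hΦepi _ hv.le
  have hβ : 0 < β := by
    have := hΦ v (r - 1) ▸ hΦcone (v, r - 1) (by simp [cone])
    linarith
  have hle_u : ψ v + r * β ≤ u := by
    refine le_of_forall_pos_lt_add fun δ hδ => ?_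
    have := hΦ v (r - δ / β) ▸ hΦcone (v, r - δ / β) (by simp [cone, hδ, hβ])
    rw [sub_mul, div_mul_cancel₀ _ hβ.ne'] at this
    linarith
  refine ⟨-β⁻¹ • ψ, (isSubgrad_iff_of_eq_coe hv).2 fun y => ?_⟩
  induction hFy : F y using EReal.rec with
  | bot => simpa [hFy] using hcone y
  | top => exact le_top
  | coe t =>
    have hyt : u ≤ ψ y + t * β := hΦ y t ▸ hΦepi (y, t) hFy.le
    have : r - t ≤ β⁻¹ * ψ (y - v) := by
      rw [le_inv_mul_iff₀ hβ, map_sub]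
      linarith
    simp only [smul_apply, smul_eq_mul, EReal.coe_le_coe_iff]
    linarith

end Normed

/-- Density part of the Brøndsted–Rockafellar theorem. -/
theorem subset_closure_subdiffDom {X : Type*} [NormedAddCommGroup X] [NormedSpace ℝ X]
    [CompleteSpace X] {g : X → EReal} (hconv : ConvexEpi g) (hlsc : LowerSemicontinuous g)
    (φ : X →L[ℝ] ℝ) (c : ℝ) (hφ : ∀ y, ((φ y + c : ℝ) : EReal) ≤ g y) :
    {x | g x ≠ ⊤} ⊆ closure (subdiffDom g) := by
  intro x₀ hx₀
  rw [Metric.mem_closure_iff]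
  intro δ hδ
  set F : X → EReal := fun y => g y + (((-φ) y + -c : ℝ) : EReal)
  have hφ_neg (y : X) : (-φ) y + -c = -(φ y + c) := by
    rw [neg_apply, neg_add]
  have hF_nonneg (y : X) : ((0 : ℝ) : EReal) ≤ F y :=
    calc ((0 : ℝ) : EReal) = ((φ y + c : ℝ) : EReal) + (((-φ) y + -c : ℝ) : EReal) := by
          rw [← EReal.coe_add, hφ_neg, add_neg_cancel]
      _ ≤ F y := add_le_add_left (hφ y) _
  have hgF : g = fun y => F y + ((φ y + c : ℝ) : EReal) := by
    ext y
    rw [add_assoc, ← EReal.coe_add, hφ_neg, neg_add_cancel, EReal.coe_zero, add_zero]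
  obtain ⟨r₀, hr₀⟩ : ∃ r₀ : ℝ, F x₀ = r₀ :=
    ⟨(F x₀).toReal, (EReal.coe_toReal (EReal.add_ne_top hx₀ (EReal.coe_ne_top _))
      (ne_bot_of_le_ne_bot (EReal.coe_ne_bot 0) (hF_nonneg x₀))).symm⟩
  have hr₀_nonneg : 0 ≤ r₀ := EReal.coe_le_coe_iff.1 (hr₀ ▸ hF_nonneg x₀)
  have hε : 0 < (r₀ + 1) / δ := by positivity
  obtain ⟨v, r, hv, hvx₀, hslope⟩ := exists_forall_le_add_mul_dist_ereal
    (hlsc.add_coe (by fun_prop)) hF_nonneg hr₀ hε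
  obtain ⟨p, hp⟩ := exists_isSubgrad_of_le_add_mul_norm (F := F)
    (hconv.add_affine (-φ : X →L[ℝ] ℝ).toLinearMap (-c)) hε.le hv
    (by simpa only [dist_eq_norm] using hslope)
  refine ⟨v, ⟨p + φ, hgF ▸ hp.add_affine φ c⟩, ?_⟩
  have hr : 0 ≤ r := EReal.coe_le_coe_iff.1 (hv ▸ hF_nonneg v)
  rw [dist_comm]
  calc dist v x₀ = (r₀ + 1) / δ * dist v x₀ / ((r₀ + 1) / δ) := by field_simp
    _ < (r₀ + 1) / ((r₀ + 1) / δ) := by gcongr; linarith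
    _ = δ := by field_simp

theorem subdiffDom_dense_in_dom_general {X : Type*} [NormedAddCommGroup X] [NormedSpace ℝ X] [CompleteSpace X]
    (f : X → EReal)
    (hmax : MaxMonotoneSet (graphSub f)) :
    {x | f x ≠ ⊤} ⊆ closure (subdiffDom f) := by
  obtain ⟨⟨a, s⟩, has⟩ := hmax.nonempty
  intro x hx
  rw [← hmax.subdiffDom_upperEnv]
  exact subset_closure_subdiffDom (convexEpi_upperEnv f) (lowerSemicontinuous_upperEnv f) s _
    (IsSubgrad.coe_le_upperEnv has) (ne_top_of_le_ne_top hx (upperEnv_le f x))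

theorem subdiffDom_dense_in_dom {X : Type*} [NormedAddCommGroup X] [NormedSpace ℝ X] [CompleteSpace X]
    (f : X → EReal) (hbot : ∀ x, f x ≠ ⊥)
    (hmax : MaxMonotoneSet (graphSub f)) :
    {x | f x ≠ ⊤} ⊆ closure (subdiffDom f) :=
  subdiffDom_dense_in_dom_general f hmax
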